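/- Let F(t), t ∈ [0,1], be a family of m-order n-dimensional irreducible nonnegative tensors such that each entry function F_{i_1...i_m}(t) is either identically zero or positive and log convex in t. Let A = F(0), B = F(1), and G(t) be the tensor with entries A_{i_1...i_m}^{1−t} B_{i_1...i_m}^{t}. Then ρ(F(t)) ≤ ρ(G(t)) ≤ ρ(A)^{1−t} ρ(B)^{t} for all t ∈ [0,1]; in particular ρ(F(t)) is a log convex function of t. -/

import Mathlib

open Finset

/-- An `(m+1)`-order, `n`-dimensional real tensor. -/
abbrev Tensor (m n : ℕ) := (Fin (m + 1) → Fin n) → ℝ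

/-- `(A x^{m-1})_i` over ℂ. -/
noncomputable def tApplyC {m n : ℕ} (T : Tensor m n) (x : Fin n → ℂ) (i : Fin n) : ℂ :=
  ∑ j : Fin m → Fin n, (T (Fin.cons i j) : ℂ) * ∏ k, x (j k)

/-- `(A x^{m-1})_i` over ℝ. -/
noncomputable def tApply {m n : ℕ} (T : Tensor m n) (x : Fin n → ℝ) (i : Fin n) : ℝ :=
  ∑ j : Fin m → Fin n, T (Fin.cons i j) * ∏ k, x (j k)

/-- eigenvalue of a tensor -/
def IsEig {m n : ℕ} (T : Tensor m n) (lam : ℂ) : Prop :=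
  ∃ x : Fin n → ℂ, x ≠ 0 ∧ ∀ i, tApplyC T x i = lam * (x i) ^ m

/-- spectral radius -/
noncomputable def specRad {m n : ℕ} (T : Tensor m n) : ℝ :=
  sSup {r : ℝ | ∃ lam : ℂ, IsEig T lam ∧ ‖lam‖ = r}

/-- the unit tensor -/
def unitT (m n : ℕ) : Tensor m n := fun idx => if ∀ k, idx k = idx 0 then 1 else 0

def TNonneg {m n : ℕ} (T : Tensor m n) : Prop := ∀ idx, 0 ≤ T idx

def TEssNonneg {m n : ℕ} (T : Tensor m n) : Prop :=
  ∀ idx, (¬ ∀ k, idx k = idx 0) → 0 ≤ T idx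

def TDiagonal {m n : ℕ} (T : Tensor m n) : Prop :=
  ∀ idx, (¬ ∀ k, idx k = idx 0) → T idx = 0

def TReducible {m n : ℕ} (T : Tensor m n) : Prop :=
  ∃ S : Finset (Fin n), S.Nonempty ∧ S ≠ Finset.univ ∧
    ∀ i ∈ S, ∀ j : Fin m → Fin n, (∀ k, j k ∉ S) → T (Fin.cons i j) = 0

def TIrreducible {m n : ℕ} (T : Tensor m n) : Prop := ¬ TReducible T

def TSymmetric {m n : ℕ} (T : Tensor m n) : Prop :=
  ∀ (σ : Equiv.Perm (Fin (m + 1))) (idx : Fin (m + 1) → Fin n), T (idx ∘ σ) = T idx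

/-- shift making a tensor nonnegative -/
noncomputable def shiftAlpha {m n : ℕ} (T : Tensor m n) : ℝ :=
  (∑ i : Fin n, |T (fun _ => i)|) + 1

/-- dominant eigenvalue of an essentially nonnegative tensor -/
noncomputable def domEig {m n : ℕ} (T : Tensor m n) : ℝ :=
  specRad (fun idx => T idx + shiftAlpha T * unitT m n idx) - shiftAlpha T

/-- homogeneous form `T x^m` -/
noncomputable def tForm {m n : ℕ} (T : Tensor m n) (x : Fin n → ℝ) : ℝ :=
  ∑ idx : Fin (m + 1) → Fin n, T idx * ∏ k, x (idx k)

/-! Entrywise log convexity gives `F t ≤ G t = A^(1-t) B^t`, so `ρ(F t) ≤ ρ(G t)` by monotonicity.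
If `u`, `v` are Perron vectors of `A` and `B`, Hölder's inequality shows that
`z = u^(1-t) v^t` satisfies `G(t) z^(m-1) ≤ ρ(A)^(1-t) ρ(B)^t z^[m-1]`, which bounds `ρ(G t)`.
Running the same argument between any two points of `[0,1]` instead of `0` and `1` gives the
log convexity of `ρ(F t)`, which is positive unless `F` vanishes identically on `[0,1]`, in
which case it is constant. -/

section LogConvex

variable {E : Type*} [AddCommMonoid E] [Module ℝ E] {s : Set E} {f : E → ℝ}

lemma le_rpow_mul_rpow_of_convexOn_log (hf : ∀ x ∈ s, 0 < f x)
    (hlog : ConvexOn ℝ s fun x => Real.log (f x)) {x y : E} (hx : x ∈ s) (hy : y ∈ s)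
    {a b : ℝ} (ha : 0 ≤ a) (hb : 0 ≤ b) (hab : a + b = 1) :
    f (a • x + b • y) ≤ f x ^ a * f y ^ b := by
  rw [← Real.exp_log (hf _ (hlog.1 hx hy ha hb hab)), Real.rpow_def_of_pos (hf x hx),
    Real.rpow_def_of_pos (hf y hy), ← Real.exp_add, Real.exp_le_exp, mul_comm, mul_comm (Real.log _)]
  exact hlog.2 hx hy ha hb hab

lemma le_rpow_mul_rpow_of_eq_zero_or_convexOn_log (hs : Convex ℝ s)
    (hf : (∀ x ∈ s, f x = 0) ∨ ((∀ x ∈ s, 0 < f x) ∧ ConvexOn ℝ s fun x => Real.log (f x)))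
    {x y : E} (hx : x ∈ s) (hy : y ∈ s) {a b : ℝ} (ha : 0 ≤ a) (hb : 0 ≤ b) (hab : a + b = 1) :
    f (a • x + b • y) ≤ f x ^ a * f y ^ b := by
  rcases hf with hzero | ⟨hpos, hlog⟩
  · rw [hzero _ (hs hx hy ha hb hab), hzero x hx, hzero y hy]
    positivity
  · exact le_rpow_mul_rpow_of_convexOn_log hpos hlog hx hy ha hb hab

lemma convexOn_log_of_le_rpow_mul_rpow (hs : Convex ℝ s) (hf : ∀ x ∈ s, 0 < f x)
    (h : ∀ x ∈ s, ∀ y ∈ s, ∀ a b : ℝ, 0 ≤ a → 0 ≤ b → a + b = 1 →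
      f (a • x + b • y) ≤ f x ^ a * f y ^ b) :
    ConvexOn ℝ s fun x => Real.log (f x) := by
  refine ⟨hs, fun x hx y hy a b ha hb hab => ?_⟩
  have hfx := hf x hx
  have hfy := hf y hy
  calc Real.log (f (a • x + b • y))
      ≤ Real.log (f x ^ a * f y ^ b) :=
        Real.log_le_log (hf _ (hs hx hy ha hb hab)) (h x hx y hy a b ha hb hab)
    _ = a • Real.log (f x) + b • Real.log (f y) := by
        rw [Real.log_mul (by positivity) (by positivity), Real.log_rpow hfx, Real.log_rpow hfy,
          smul_eq_mul, smul_eq_mul]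

end LogConvex

theorem Finset.sum_rpow_mul_rpow_le {ι : Type*} (s : Finset ι) {f g : ι → ℝ}
    (hf : ∀ i ∈ s, 0 ≤ f i) (hg : ∀ i ∈ s, 0 ≤ g i) {a b : ℝ} (ha : 0 ≤ a) (hb : 0 ≤ b)
    (hab : a + b = 1) :
    ∑ i ∈ s, f i ^ a * g i ^ b ≤ (∑ i ∈ s, f i) ^ a * (∑ i ∈ s, g i) ^ b := by
  rcases ha.eq_or_lt with rfl | ha
  · obtain rfl : b = 1 := by linarith
    simp
  rcases hb.eq_or_lt with rfl | hb
  · obtain rfl : a = 1 := by linarith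
    simp
  have := Real.inner_le_Lp_mul_Lq_of_nonneg s (Real.HolderConjugate.inv_inv ha hb hab)
    (fun i hi => Real.rpow_nonneg (hf i hi) a) (fun i hi => Real.rpow_nonneg (hg i hi) b)
  simpa [Finset.sum_congr rfl fun i hi => Real.rpow_rpow_inv (hf i hi) ha.ne',
    Finset.sum_congr rfl fun i hi => Real.rpow_rpow_inv (hg i hi) hb.ne'] using this

section Tensor

variable {m n : ℕ}

lemma tApply_nonneg {T : Tensor m n} (hT : TNonneg T) {x : Fin n → ℝ} (hx : ∀ i, 0 ≤ x i)
    (i : Fin n) : 0 ≤ tApply T x i :=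
  Finset.sum_nonneg fun _ _ => mul_nonneg (hT _) (Finset.prod_nonneg fun _ _ => hx _)

lemma entry_mul_prod_le_tApply {T : Tensor m n} (hT : TNonneg T) {x : Fin n → ℝ}
    (hx : ∀ i, 0 ≤ x i) (idx : Fin (m + 1) → Fin n) :
    T idx * ∏ k, x (Fin.tail idx k) ≤ tApply T x (idx 0) := by
  conv_lhs => rw [← Fin.cons_self_tail idx]
  exact Finset.single_le_sum (f := fun j => T (Fin.cons (idx 0) j) * ∏ k, x (j k))
    (fun _ _ => mul_nonneg (hT _) (Finset.prod_nonneg fun _ _ => hx _)) (Finset.mem_univ _)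

lemma eigenvalue_nonneg {T : Tensor m n} (hT : TNonneg T) {u : Fin n → ℝ} (hu : ∀ i, 0 < u i)
    {r : ℝ} {i : Fin n} (hr : tApply T u i = r * u i ^ m) : 0 ≤ r :=
  nonneg_of_mul_nonneg_left (hr ▸ tApply_nonneg hT (fun j => (hu j).le) i) (pow_pos (hu i) m)

lemma eigenvalue_pos {T : Tensor m n} (hT : TNonneg T) {u : Fin n → ℝ} (hu : ∀ i, 0 < u i)
    {idx : Fin (m + 1) → Fin n} (hidx : 0 < T idx) {r : ℝ}
    (hr : tApply T u (idx 0) = r * u (idx 0) ^ m) : 0 < r := by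
  have hpos : 0 < tApply T u (idx 0) :=
    (mul_pos hidx (Finset.prod_pos fun _ _ => hu _)).trans_le
      (entry_mul_prod_le_tApply hT (fun j => (hu j).le) idx)
  exact pos_of_mul_pos_left (hr ▸ hpos) (pow_pos (hu _) m).le

lemma tApply_rpow_mul_rpow_le {P Q : Tensor m n} (hP : TNonneg P) (hQ : TNonneg Q)
    {u v : Fin n → ℝ} (hu : ∀ i, 0 ≤ u i) (hv : ∀ i, 0 ≤ v i) {a b : ℝ} (ha : 0 ≤ a)
    (hb : 0 ≤ b) (hab : a + b = 1) (i : Fin n) :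
    tApply (fun idx => P idx ^ a * Q idx ^ b) (fun j => u j ^ a * v j ^ b) i ≤
      tApply P u i ^ a * tApply Q v i ^ b := by
  have hprod : ∀ j : Fin m → Fin n,
      P (Fin.cons i j) ^ a * Q (Fin.cons i j) ^ b * ∏ k, (u (j k) ^ a * v (j k) ^ b) =
        (P (Fin.cons i j) * ∏ k, u (j k)) ^ a * (Q (Fin.cons i j) * ∏ k, v (j k)) ^ b := by
    intro j
    rw [Finset.prod_mul_distrib, Real.finsetProd_rpow _ _ (fun k _ => hu _),
      Real.finsetProd_rpow _ _ (fun k _ => hv _),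
      Real.mul_rpow (hP _) (Finset.prod_nonneg fun k _ => hu _),
      Real.mul_rpow (hQ _) (Finset.prod_nonneg fun k _ => hv _)]
    ring
  simp only [tApply, hprod]
  exact Finset.sum_rpow_mul_rpow_le _
    (fun j _ => mul_nonneg (hP _) (Finset.prod_nonneg fun k _ => hu _))
    (fun j _ => mul_nonneg (hQ _) (Finset.prod_nonneg fun k _ => hv _)) ha hb hab

lemma TNonneg.rpow_mul_rpow {P Q : Tensor m n} (hP : TNonneg P) (hQ : TNonneg Q) (a b : ℝ) :
    TNonneg fun idx => P idx ^ a * Q idx ^ b :=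
  fun idx => mul_nonneg (Real.rpow_nonneg (hP idx) a) (Real.rpow_nonneg (hQ idx) b)

lemma specRad_rpow_mul_rpow_le
    (hPF : ∀ T : Tensor m n, TNonneg T → TIrreducible T →
      ∃ u : Fin n → ℝ, (∀ i, 0 < u i) ∧ ∀ i, tApply T u i = specRad T * (u i) ^ m)
    (hub : ∀ (T : Tensor m n), TNonneg T → ∀ (β : ℝ) (z : Fin n → ℝ),
      (∀ i, 0 < z i) → (∀ i, tApply T z i ≤ β * (z i) ^ m) → specRad T ≤ β)
    {P Q : Tensor m n} (hP : TNonneg P) (hPi : TIrreducible P) (hQ : TNonneg Q)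
    (hQi : TIrreducible Q) {a b : ℝ} (ha : 0 ≤ a) (hb : 0 ≤ b) (hab : a + b = 1) :
    specRad (fun idx => P idx ^ a * Q idx ^ b) ≤ specRad P ^ a * specRad Q ^ b := by
  obtain ⟨u, hu, hPu⟩ := hPF P hP hPi
  obtain ⟨v, hv, hQv⟩ := hPF Q hQ hQi
  refine hub _ (hP.rpow_mul_rpow hQ a b) _ (fun j => u j ^ a * v j ^ b)
    (fun j => by have := hu j; have := hv j; positivity) fun i => ?_
  have hρP := eigenvalue_nonneg hP hu (hPu i)
  have hρQ := eigenvalue_nonneg hQ hv (hQv i)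
  have hui := (hu i).le
  have hvi := (hv i).le
  calc tApply (fun idx => P idx ^ a * Q idx ^ b) (fun j => u j ^ a * v j ^ b) i
      ≤ tApply P u i ^ a * tApply Q v i ^ b :=
        tApply_rpow_mul_rpow_le hP hQ (fun j => (hu j).le) (fun j => (hv j).le) ha hb hab i
    _ = (specRad P * u i ^ m) ^ a * (specRad Q * v i ^ m) ^ b := by rw [hPu, hQv]
    _ = specRad P ^ a * specRad Q ^ b * (u i ^ a * v i ^ b) ^ m := by
        rw [Real.mul_rpow hρP (by positivity), Real.mul_rpow hρQ (by positivity),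
          mul_pow, Real.rpow_pow_comm hui, Real.rpow_pow_comm hvi]
        ring

lemma specRad_pos_of_pos_entry
    (hPF : ∀ T : Tensor m n, TNonneg T → TIrreducible T →
      ∃ u : Fin n → ℝ, (∀ i, 0 < u i) ∧ ∀ i, tApply T u i = specRad T * (u i) ^ m)
    {T : Tensor m n} (hT : TNonneg T) (hTi : TIrreducible T) {idx : Fin (m + 1) → Fin n}
    (hidx : 0 < T idx) : 0 < specRad T := by
  obtain ⟨u, hu, hTu⟩ := hPF T hT hTi
  exact eigenvalue_pos hT hu hidx (hTu _)

lemma specRad_le_specRad_rpow_mul_rpow {E : Type*} [AddCommMonoid E] [Module ℝ E] {s : Set E}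
    (hs : Convex ℝ s) {F : E → Tensor m n} (hFnn : ∀ x ∈ s, TNonneg (F x))
    (hent : ∀ idx : Fin (m + 1) → Fin n, (∀ x ∈ s, F x idx = 0) ∨
      ((∀ x ∈ s, 0 < F x idx) ∧ ConvexOn ℝ s fun x => Real.log (F x idx)))
    (hmono : ∀ T T' : Tensor m n, TNonneg T → TNonneg T' →
      (∀ idx, T idx ≤ T' idx) → specRad T ≤ specRad T')
    {x y : E} (hx : x ∈ s) (hy : y ∈ s) {a b : ℝ} (ha : 0 ≤ a) (hb : 0 ≤ b) (hab : a + b = 1) :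
    specRad (F (a • x + b • y)) ≤ specRad fun idx => F x idx ^ a * F y idx ^ b :=
  hmono _ _ (hFnn _ (hs hx hy ha hb hab)) ((hFnn x hx).rpow_mul_rpow (hFnn y hy) a b)
    fun idx => le_rpow_mul_rpow_of_eq_zero_or_convexOn_log hs (hent idx) hx hy ha hb hab

end Tensor

/-- Kingman's theorem for tensors: log convexity of the
spectral radius. -/
theorem stmt15 {m n : ℕ} (F : ℝ → Tensor m n)
    (hFnn : ∀ t ∈ Set.Icc (0 : ℝ) 1, TNonneg (F t))
    (hFirr : ∀ t ∈ Set.Icc (0 : ℝ) 1, TIrreducible (F t))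
    (hent : ∀ idx : Fin (m + 1) → Fin n,
      (∀ t ∈ Set.Icc (0 : ℝ) 1, F t idx = 0) ∨
      ((∀ t ∈ Set.Icc (0 : ℝ) 1, 0 < F t idx) ∧
        ConvexOn ℝ (Set.Icc (0 : ℝ) 1) (fun t => Real.log (F t idx))))
    (A B : Tensor m n) (hA : A = F 0) (hB : B = F 1)
    (G : ℝ → Tensor m n) (hG : ∀ t idx, G t idx = A idx ^ (1 - t) * B idx ^ t)
    (hmono : ∀ T T' : Tensor m n, TNonneg T → TNonneg T' →
      (∀ idx, T idx ≤ T' idx) → specRad T ≤ specRad T')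
    (hPF : ∀ T : Tensor m n, TNonneg T → TIrreducible T →
      ∃ u : Fin n → ℝ, (∀ i, 0 < u i) ∧ ∀ i, tApply T u i = specRad T * (u i) ^ m)
    (hub : ∀ (T : Tensor m n), TNonneg T → ∀ (β : ℝ) (z : Fin n → ℝ),
      (∀ i, 0 < z i) → (∀ i, tApply T z i ≤ β * (z i) ^ m) → specRad T ≤ β) :
    (∀ t ∈ Set.Icc (0 : ℝ) 1,
      specRad (F t) ≤ specRad (G t) ∧
      specRad (G t) ≤ specRad A ^ (1 - t) * specRad B ^ t) ∧
    ConvexOn ℝ (Set.Icc (0 : ℝ) 1) (fun t => Real.log (specRad (F t))) := by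
  subst hA hB
  have hI : Convex ℝ (Set.Icc (0 : ℝ) 1) := convex_Icc 0 1
  have hρ_le : ∀ x ∈ Set.Icc (0 : ℝ) 1, ∀ y ∈ Set.Icc (0 : ℝ) 1, ∀ a b : ℝ,
      0 ≤ a → 0 ≤ b → a + b = 1 →
      specRad (F (a • x + b • y)) ≤ specRad (F x) ^ a * specRad (F y) ^ b :=
    fun x hx y hy a b ha hb hab =>
      (specRad_le_specRad_rpow_mul_rpow hI hFnn hent hmono hx hy ha hb hab).trans
        (specRad_rpow_mul_rpow_le hPF hub (hFnn x hx) (hFirr x hx) (hFnn y hy) (hFirr y hy)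
          ha hb hab)
  have h0 : (0 : ℝ) ∈ Set.Icc (0 : ℝ) 1 := Set.left_mem_Icc.2 zero_le_one
  have h1 : (1 : ℝ) ∈ Set.Icc (0 : ℝ) 1 := Set.right_mem_Icc.2 zero_le_one
  refine ⟨fun t ht => ?_, ?_⟩
  · have h1t : 0 ≤ 1 - t := sub_nonneg.2 ht.2
    rw [show G t = fun idx => F 0 idx ^ (1 - t) * F 1 idx ^ t from funext (hG t)]
    constructor
    · simpa using specRad_le_specRad_rpow_mul_rpow hI hFnn hent hmono h0 h1 h1t ht.1
        (sub_add_cancel 1 t)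
    · exact specRad_rpow_mul_rpow_le hPF hub (hFnn 0 h0) (hFirr 0 h0) (hFnn 1 h1) (hFirr 1 h1)
        h1t ht.1 (sub_add_cancel 1 t)
  by_cases hzero : ∀ idx, ∀ t ∈ Set.Icc (0 : ℝ) 1, F t idx = 0
  · refine (convexOn_const (Real.log (specRad (F 0))) hI).congr fun t ht => ?_
    have hF : F t = F 0 := funext fun idx => (hzero idx t ht).trans (hzero idx 0 h0).symm
    simp only [hF]
  push Not at hzero
  obtain ⟨idx, t₀, ht₀, hne⟩ := hzero
  have hpos : ∀ t ∈ Set.Icc (0 : ℝ) 1, 0 < F t idx :=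
    ((hent idx).resolve_left fun h => hne (h t₀ ht₀)).1
  exact convexOn_log_of_le_rpow_mul_rpow hI
    (fun t ht => specRad_pos_of_pos_entry hPF (hFnn t ht) (hFirr t ht) (hpos t ht)) hρ_le
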